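/- arXiv:1310.4316 — 5 statements merged into one kernel-verified Lean document; each statement's English description precedes it below -/
import Mathlib

section
/- For every 0 < α < 1, the probability generating function of the stopping time τ_{AB} satisfies E(α^{τ_{AB}}) = (1 + (1−α)·(A∗B)(α)) / (1 + (1−α)·(B∗B)(α)). -/
/-!
Renewal argument. Let `s_W(t)` be the probability that the word `W` followed by `t` fresh letters
ends with `B`. Splitting the event that the word at time `k` ends with `B` according to the time
`j` of the first occurrence of `B` (at which the word ends with `B`, while the later letters are
independent of the past) gives `s_A(k) = ∑_{j ≤ k} Pr(τ = j) s_B(k - j)`. Hence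
`E(α^τ) · S_B(α) = S_A(α)` for the generating functions `S_W(α) = ∑ s_W(t) α^t`, and
`S_W(α) = Pr(B) α^{|B|} ((W∗B)(α) + 1/(1-α))`: the terms `t ≥ |B|` form a geometric series and
the terms `t < |B|` are those of the correlation, with overlap `|B| - t`.
-/

open MeasureTheory ProbabilityTheory Finset

/-- The probability `Pr(C)` of a pattern (word) `C`, with letter distribution `p`. -/
def patProb {S : Type*} (p : S → ℝ) (C : List S) : ℝ := (C.map p).prod

/-- `lastK C k` is the pattern `C^(k)` formed by the last `k` letters of `C`. -/
def lastK {S : Type*} (C : List S) (k : ℕ) : List S := C.drop (C.length - k)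

/-- The correlation function `(A ∗ B)(α)`. -/
noncomputable def corr {S : Type*} [DecidableEq S] (p : S → ℝ) (A B : List S) (α : ℝ) : ℝ :=
  ∑ k ∈ Finset.Icc 1 (min A.length B.length),
    (if lastK A k = List.take k B then (1 : ℝ) else 0) / (patProb p (List.take k B) * α ^ k)

/-- The word `a₁…a_{l-1}ξ₀ξ₁…ξ_k = A ++ ξ₁…ξ_k` observed at time `k` (here `ξ i` denotes
the `(i+1)`-st letter generated by the casino, and `ξ₀` is the last letter of `A`). -/
def obsWord {S : Type*} {Ω : Type*} (A : List S) (ξ : ℕ → Ω → S) (k : ℕ) (ω : Ω) : List S :=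
  A ++ List.ofFn fun i : Fin k => ξ i ω

/-- The stopping time `τ_{AB}`: the least `k ≥ 0` such that `B` is a contiguous subpattern of
`a₁…a_{l-1}ξ₀ξ₁…ξ_k` (with `ξ₀ = a_l`). -/
noncomputable def hitTime {S : Type*} {Ω : Type*} (A B : List S) (ξ : ℕ → Ω → S) (ω : Ω) : ℕ :=
  sInf {k : ℕ | B <:+: obsWord A ξ k ω}

namespace List

variable {S : Type*}

theorem suffix_append_iff_take_drop {B W v : List S} :
    B <:+ W ++ v ↔
      B.take (B.length - v.length) <:+ W ∧ B.drop (B.length - v.length) <:+ v := by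
  rcases le_total v.length B.length with hv | hv
  · have hlen : (B.drop (B.length - v.length)).length = v.length := by simp; omega
    conv_lhs => rw [← B.take_append_drop (B.length - v.length)]
    rw [suffix_append_inj_of_length_eq hlen]
    exact and_congr_right fun _ => ⟨fun h => by rw [h], fun h => h.eq_of_length hlen⟩
  · rw [Nat.sub_eq_zero_of_le hv, take_zero, drop_zero]
    exact ⟨fun h => ⟨nil_suffix, suffix_of_suffix_length_le h (suffix_append W v) hv⟩,
      fun h => suffix_append_of_suffix h.2⟩

theorem IsInfix.suffix_or_infix_dropLast {B L : List S} (h : B <:+: L) :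
    B <:+ L ∨ B <:+: L.dropLast := by
  rcases eq_or_ne L [] with rfl | hL
  · exact .inl (eq_nil_of_infix_nil h ▸ nil_suffix)
  · have hL' := dropLast_append_getLast hL
    rwa [← hL', infix_concat_iff, hL'] at h

end List

section Patterns

variable {S : Type*}

theorem patProb_append (p : S → ℝ) (x y : List S) :
    patProb p (x ++ y) = patProb p x * patProb p y := by
  simp [patProb]

theorem patProb_pos {p : S → ℝ} (hp : ∀ a, 0 < p a) (C : List S) : 0 < patProb p C :=
  List.prod_pos fun _ ha => by
    obtain ⟨a, -, rfl⟩ := List.mem_map.1 ha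
    exact hp a

end Patterns

section SuffixProb

variable {S : Type*} [DecidableEq S] {p : S → ℝ} {α : ℝ}

/-- The probability that the word `W` followed by `t` random letters ends with `B`. -/
noncomputable def suffixProb (p : S → ℝ) (W B : List S) (t : ℕ) : ℝ :=
  if B.take (B.length - t) <:+ W then patProb p (B.drop (B.length - t)) else 0

theorem suffixProb_nonneg (hp : ∀ a, 0 < p a) (W B : List S) (t : ℕ) :
    0 ≤ suffixProb p W B t := by
  unfold suffixProb
  split_ifs
  exacts [(patProb_pos hp _).le, le_rfl]

theorem suffixProb_of_length_le (W : List S) {B : List S} {t : ℕ} (ht : B.length ≤ t) :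
    suffixProb p W B t = patProb p B := by
  simp [suffixProb, Nat.sub_eq_zero_of_le ht]

theorem corr_eq_sum_Icc (W B : List S) (α : ℝ) :
    corr p W B α = ∑ k ∈ Icc 1 B.length,
      (if B.take k <:+ W then (1 : ℝ) else 0) / (patProb p (B.take k) * α ^ k) := by
  have hcond : ∀ k ≤ B.length, (lastK W k = B.take k ↔ B.take k <:+ W) := fun k hk => by
    rw [List.suffix_iff_eq_drop, List.length_take_of_le hk, lastK, eq_comm]
  refine sum_subset (Icc_subset_Icc_right (min_le_right _ _)) (fun k hk hk' => ?_) |>.symm.trans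
    (sum_congr rfl fun k hk => ?_) |>.symm
  · rw [mem_Icc] at hk hk'
    rw [if_neg fun h => hk' ⟨hk.1, le_min ?_ hk.2⟩, zero_div]
    simpa [hk.2] using h.length_le
  · rw [if_congr (hcond k ((mem_Icc.1 hk).2.trans (min_le_right _ _))) rfl rfl]

theorem corr_nonneg (hp : ∀ a, 0 < p a) (hα : 0 ≤ α) (W B : List S) : 0 ≤ corr p W B α :=
  sum_nonneg fun _ _ => div_nonneg (by split_ifs <;> norm_num)
    (mul_nonneg (patProb_pos hp _).le (pow_nonneg hα _))

theorem sum_range_suffixProb_mul_pow (hp : ∀ a, 0 < p a) (hα : α ≠ 0) (W B : List S) :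
    ∑ t ∈ range B.length, suffixProb p W B t * α ^ t =
      patProb p B * α ^ B.length * corr p W B α := by
  rw [corr_eq_sum_Icc, mul_sum]
  refine sum_nbij' (B.length - ·) (B.length - ·) (fun t ht => ?_) (fun k hk => ?_)
    (fun t ht => ?_) (fun k hk => ?_) (fun t ht => ?_)
  all_goals simp only [mem_range, mem_Icc] at *
  any_goals omega
  · rw [suffixProb]
    split_ifs
    · have hsplit : patProb p B =
          patProb p (B.take (B.length - t)) * patProb p (B.drop (B.length - t)) := by
        rw [← patProb_append, List.take_append_drop]
      rw [hsplit, ← pow_sub_mul_pow α ht.le]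
      field_simp [(patProb_pos hp (B.take (B.length - t))).ne']
    · simp

theorem suffixProb_add_length_mul_pow (W B : List S) (t : ℕ) :
    suffixProb p W B (t + B.length) * α ^ (t + B.length) = patProb p B * α ^ B.length * α ^ t := by
  rw [suffixProb_of_length_le W (Nat.le_add_left _ _), pow_add]
  ring

theorem summable_suffixProb_mul_pow (hα0 : 0 ≤ α) (hα1 : α < 1) (W B : List S) :
    Summable fun t => suffixProb p W B t * α ^ t := by
  rw [← summable_nat_add_iff B.length, funext (suffixProb_add_length_mul_pow W B)]
  exact (summable_geometric_of_lt_one hα0 hα1).mul_left _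

theorem tsum_suffixProb_mul_pow (hp : ∀ a, 0 < p a) (hα0 : 0 < α) (hα1 : α < 1) (W B : List S) :
    ∑' t, suffixProb p W B t * α ^ t =
      patProb p B * α ^ B.length * (corr p W B α + (1 - α)⁻¹) := by
  rw [← (summable_suffixProb_mul_pow hα0.le hα1 W B).sum_add_tsum_nat_add B.length,
    sum_range_suffixProb_mul_pow hp hα0.ne', tsum_congr (suffixProb_add_length_mul_pow W B),
    tsum_mul_left, tsum_geometric_of_lt_one hα0.le hα1, mul_add]

end SuffixProb

section Words

variable {S Ω : Type*} (A B : List S) (ξ : ℕ → Ω → S)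

def window (n t : ℕ) (ω : Ω) : List S := List.ofFn fun i : Fin t => ξ (n + i) ω

def firstHit (j : ℕ) : Set Ω :=
  {ω | B <:+: obsWord A ξ j ω ∧ ∀ i < j, ¬ B <:+: obsWord A ξ i ω}

variable {A B ξ}

theorem length_window (n t : ℕ) (ω : Ω) : (window ξ n t ω).length = t := by
  simp [window]

theorem window_add (n t d : ℕ) (ω : Ω) :
    window ξ n (t + d) ω = window ξ n t ω ++ window ξ (n + t) d ω := by
  simp [window, List.ofFn_add, Nat.add_assoc]

theorem window_succ (n d : ℕ) (ω : Ω) : window ξ n (d + 1) ω = ξ n ω :: window ξ (n + 1) d ω := by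
  simp [window, List.ofFn_succ, Nat.add_comm 1, Nat.add_assoc]

theorem obsWord_eq_append_window (k : ℕ) (ω : Ω) : obsWord A ξ k ω = A ++ window ξ 0 k ω := by
  simp [obsWord, window]

theorem obsWord_add (n t : ℕ) (ω : Ω) :
    obsWord A ξ (n + t) ω = obsWord A ξ n ω ++ window ξ n t ω := by
  simp only [obsWord_eq_append_window, window_add, Nat.zero_add, List.append_assoc]

theorem isSuffix_window_iff {D : List S} {n t : ℕ} (hD : D.length ≤ t) (ω : Ω) :
    D <:+ window ξ n t ω ↔ window ξ (n + (t - D.length)) D.length ω = D := by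
  rw [← Nat.sub_add_cancel hD, window_add, Nat.add_sub_cancel, ← List.nil_append D,
    List.suffix_append_inj_of_length_eq (by simp [length_window]), List.nil_append]
  simp [eq_comm]

theorem hitTime_eq_iff {ω : Ω} (h : ∃ k, B <:+: obsWord A ξ k ω) {j : ℕ} :
    hitTime A B ξ ω = j ↔ ω ∈ firstHit A B ξ j := by
  constructor
  · rintro rfl
    exact ⟨Nat.sInf_mem h, fun i hi => Nat.notMem_of_lt_sInf hi⟩
  · rintro ⟨hj, hmin⟩
    exact le_antisymm (Nat.sInf_le hj) (not_lt.1 fun hlt => hmin _ hlt (Nat.sInf_mem h))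

theorem hitTime_le {ω : Ω} {k : ℕ} (h : B <:+: obsWord A ξ k ω) : hitTime A B ξ ω ≤ k :=
  Nat.sInf_le h

theorem disjoint_firstHit {i j : ℕ} (hij : i ≠ j) :
    Disjoint (firstHit A B ξ i) (firstHit A B ξ j) := by
  rw [Set.disjoint_left]
  rintro ω ⟨hi, hi'⟩ ⟨hj, hj'⟩
  rcases hij.lt_or_gt with h | h
  exacts [hj' i h hi, hi' j h hj]

theorem isSuffix_of_mem_firstHit (hBA : ¬ B <:+: A.dropLast) {j : ℕ} {ω : Ω}
    (hω : ω ∈ firstHit A B ξ j) : B <:+ obsWord A ξ j ω := by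
  refine hω.1.suffix_or_infix_dropLast.resolve_right fun h => ?_
  cases j with
  | zero => exact hBA (by simpa [obsWord] using h)
  | succ i =>
    refine hω.2 i i.lt_succ_self ?_
    rwa [obsWord_add, window_succ, List.dropLast_append_of_ne_nil (List.cons_ne_nil _ _),
      window, List.ofFn_zero, List.dropLast_singleton, List.append_nil] at h

theorem iUnion_firstHit :
    ⋃ j, firstHit A B ξ j = {ω | ∃ k, B <:+: obsWord A ξ k ω} := by
  ext ω
  refine ⟨fun h => ?_, fun h => Set.mem_iUnion.2 ⟨_, (hitTime_eq_iff h).1 rfl⟩⟩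
  obtain ⟨j, hj⟩ := Set.mem_iUnion.1 h
  exact ⟨j, hj.1⟩

theorem hitTime_preimage_singleton (j : ℕ) :
    hitTime A B ξ ⁻¹' {j} =
      firstHit A B ξ j ∪ {ω | j = 0 ∧ ∀ k, ¬ B <:+: obsWord A ξ k ω} := by
  ext ω
  by_cases h : ∃ k, B <:+: obsWord A ξ k ω
  · simp [hitTime_eq_iff h, h]
  · have h0 : hitTime A B ξ ω = 0 := by
      rw [hitTime, Nat.sInf_eq_zero]
      exact .inr (Set.eq_empty_of_forall_notMem fun k hk => h ⟨k, hk⟩)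
    simp only [not_exists] at h
    simp [h0, h, firstHit, eq_comm]

end Words

section Letters

variable {S Ω : Type*} [MeasurableSpace S] {ξ : ℕ → Ω → S}

abbrev letterSigma (ξ : ℕ → Ω → S) (s : Set ℕ) : MeasurableSpace Ω :=
  ⨆ i ∈ s, MeasurableSpace.comap (ξ i) ‹_›

theorem letterSigma_le [MeasurableSpace Ω] (hmeas : ∀ n, Measurable (ξ n)) (s : Set ℕ) :
    letterSigma ξ s ≤ ‹MeasurableSpace Ω› :=
  iSup₂_le fun i _ => (hmeas i).comap_le

theorem indep_letterSigma [MeasurableSpace Ω] {μ : Measure Ω} (hmeas : ∀ n, Measurable (ξ n))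
    (hindep : iIndepFun ξ μ) {s t : Set ℕ} (hst : Disjoint s t) :
    Indep (letterSigma ξ s) (letterSigma ξ t) μ :=
  indep_iSup_of_disjoint (fun i => (hmeas i).comap_le) ((iIndepFun_iff_iIndep _ _ _).1 hindep) hst

theorem measurable_letter {s : Set ℕ} {i : ℕ} (hi : i ∈ s) : Measurable[letterSigma ξ s] (ξ i) :=
  Measurable.of_comap_le (le_iSup₂ (f := fun i (_ : i ∈ s) => MeasurableSpace.comap (ξ i) _) i hi)

variable [Finite S] [MeasurableSingletonClass S]

theorem measurableSet_setOf_window {s : Set ℕ} {n t : ℕ} (h : ∀ i < t, n + i ∈ s)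
    (P : List S → Prop) : MeasurableSet[letterSigma ξ s] {ω | P (window ξ n t ω)} :=
  @measurable_pi_lambda _ _ _ (letterSigma ξ s) _ (fun ω (i : Fin t) => ξ (n + i) ω)
    (fun i => measurable_letter (h i i.isLt))
    _ (Set.toFinite {v : Fin t → S | P (List.ofFn v)}).measurableSet

theorem measurableSet_setOf_obsWord {n k : ℕ} (hk : k ≤ n) (A : List S) (P : List S → Prop) :
    MeasurableSet[letterSigma ξ (Set.Iio n)] {ω | P (obsWord A ξ k ω)} := by
  simp only [obsWord_eq_append_window]
  exact measurableSet_setOf_window (fun i hi => by simp; omega) (fun w => P (A ++ w))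

theorem measurableSet_firstHit (A B : List S) (j : ℕ) :
    MeasurableSet[letterSigma ξ (Set.Iio j)] (firstHit A B ξ j) := by
  simp only [firstHit, Set.ofPred_and, Set.ofPred_forall]
  exact (measurableSet_setOf_obsWord le_rfl A _).inter <| .iInter fun i => .iInter fun hi =>
    measurableSet_setOf_obsWord (le_of_lt hi) A (¬ B <:+: ·)

theorem measurable_hitTime [MeasurableSpace Ω] (hmeas : ∀ n, Measurable (ξ n)) (A B : List S) :
    Measurable (hitTime A B ξ) := by
  refine measurable_to_countable' fun j => ?_
  rw [hitTime_preimage_singleton]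
  simp only [Set.ofPred_and, Set.ofPred_forall]
  exact (letterSigma_le hmeas _ _ (measurableSet_firstHit A B j)).union <|
    (MeasurableSet.const _).inter <| .iInter fun k =>
      letterSigma_le hmeas _ _ (measurableSet_setOf_obsWord le_rfl A (¬ B <:+: ·))

end Letters

section Probability

variable {S Ω : Type*} [Finite S] [MeasurableSpace S] [MeasurableSingletonClass S]
  [MeasurableSpace Ω] {μ : Measure Ω} [IsProbabilityMeasure μ] {p : S → ℝ} {ξ : ℕ → Ω → S}
  (hmeas : ∀ n, Measurable (ξ n)) (hindep : iIndepFun ξ μ)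
  (hdist : ∀ n a, μ {ω | ξ n ω = a} = ENNReal.ofReal (p a)) (hp : ∀ a, 0 < p a)
include hmeas hindep hdist hp

theorem measure_window_eq (D : List S) (n : ℕ) :
    μ {ω | window ξ n D.length ω = D} = ENNReal.ofReal (patProb p D) := by
  induction D generalizing n with
  | nil => simp [window, patProb]
  | cons a D ih =>
    have hset : {ω | window ξ n (a :: D).length ω = a :: D} =
        {ω | ξ n ω = a} ∩ {ω | window ξ (n + 1) D.length ω = D} := by
      ext ω
      simp [window_succ]
    rw [hset, (Indep_iff _ _ _).1 (indep_letterSigma hmeas hindep (Set.Iio_disjoint_Ici le_rfl))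
        {ω | ξ n ω = a} _
        (measurable_letter (Set.mem_Iio.2 n.lt_succ_self) (measurableSet_singleton a))
        (measurableSet_setOf_window (n := n + 1) (fun i _ => by simp) (· = D)),
      hdist, ih, ← ENNReal.ofReal_mul (hp a).le]
    simp [patProb]

theorem measure_inter_window_eq {n m : ℕ} (hnm : n ≤ m) {G : Set Ω}
    (hG : MeasurableSet[letterSigma ξ (Set.Iio n)] G) (D : List S) :
    μ (G ∩ {ω | window ξ m D.length ω = D}) = μ G * ENNReal.ofReal (patProb p D) := by
  rw [(Indep_iff _ _ _).1 (indep_letterSigma hmeas hindep (Set.Iio_disjoint_Ici le_rfl)) _ _ hG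
    (measurableSet_setOf_window (n := m) (fun i _ => by simp; omega) (· = D)),
    measure_window_eq hmeas hindep hdist hp]

/-- Whether `B` ends the word at time `n + t` splits into a condition on the word at time `n`
and one on the next `t` letters, which are independent of the past. -/
theorem measure_inter_isSuffix_obsWord {n : ℕ} {G : Set Ω}
    (hG : MeasurableSet[letterSigma ξ (Set.Iio n)] G) (A B : List S) (t : ℕ) :
    μ (G ∩ {ω | B <:+ obsWord A ξ (n + t) ω}) =
      μ (G ∩ {ω | B.take (B.length - t) <:+ obsWord A ξ n ω}) *
        ENNReal.ofReal (patProb p (B.drop (B.length - t))) := by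
  set D := B.drop (B.length - t)
  have hD : D.length ≤ t := by simp [D]; omega
  have hset : G ∩ {ω | B <:+ obsWord A ξ (n + t) ω} =
      G ∩ {ω | B.take (B.length - t) <:+ obsWord A ξ n ω} ∩
        {ω | window ξ (n + (t - D.length)) D.length ω = D} := by
    ext ω
    simp only [Set.mem_inter_iff, Set.mem_ofPred_eq, obsWord_add,
      List.suffix_append_iff_take_drop, length_window, ← isSuffix_window_iff hD, and_assoc, D]
  rw [hset, measure_inter_window_eq hmeas hindep hdist hp (Nat.le_add_right n _)
    (hG.inter (measurableSet_setOf_obsWord le_rfl A _))]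

end Probability

section SuffixEvents

variable {S Ω : Type*} [DecidableEq S] [Finite S] [MeasurableSpace S] [MeasurableSingletonClass S]
  [MeasurableSpace Ω] {μ : Measure Ω} [IsProbabilityMeasure μ] {p : S → ℝ} {ξ : ℕ → Ω → S}
  (hmeas : ∀ n, Measurable (ξ n)) (hindep : iIndepFun ξ μ)
  (hdist : ∀ n a, μ {ω | ξ n ω = a} = ENNReal.ofReal (p a)) (hp : ∀ a, 0 < p a)
include hmeas hindep hdist hp

theorem measure_isSuffix_obsWord (A B : List S) (k : ℕ) :
    μ {ω | B <:+ obsWord A ξ k ω} = ENNReal.ofReal (suffixProb p A B k) := by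
  have h := measure_inter_isSuffix_obsWord hmeas hindep hdist hp (n := 0) MeasurableSet.univ A B k
  simp only [Set.univ_inter, Nat.zero_add] at h
  rw [h, suffixProb]
  split_ifs with hB <;> simp [obsWord, hB]

theorem measure_firstHit_inter_isSuffix {A B : List S} (hBA : ¬ B <:+: A.dropLast) (j t : ℕ) :
    μ (firstHit A B ξ j ∩ {ω | B <:+ obsWord A ξ (j + t) ω}) =
      μ (firstHit A B ξ j) * ENNReal.ofReal (suffixProb p B B t) := by
  rw [measure_inter_isSuffix_obsWord hmeas hindep hdist hp (measurableSet_firstHit A B j),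
    suffixProb]
  -- on `firstHit j` the word ends with `B`, so its end of length `|B| - t` is that of `B`
  split_ifs with hB
  · have hsub : firstHit A B ξ j ⊆ {ω | B.take (B.length - t) <:+ obsWord A ξ j ω} :=
      fun ω hω => hB.trans (isSuffix_of_mem_firstHit hBA hω)
    rw [Set.inter_eq_left.2 hsub]
  · have hempty : firstHit A B ξ j ∩ {ω | B.take (B.length - t) <:+ obsWord A ξ j ω} = ∅ :=
      Set.eq_empty_of_forall_notMem fun ω hω => hB <| List.suffix_of_suffix_length_le hω.2
        (isSuffix_of_mem_firstHit hBA hω.1) (by simp)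
    simp [hempty]

theorem suffixProb_eq_sum_firstHit {A B : List S} (hBA : ¬ B <:+: A.dropLast) (k : ℕ) :
    suffixProb p A B k =
      ∑ j ∈ range (k + 1), μ.real (firstHit A B ξ j) * suffixProb p B B (k - j) := by
  have hdecomp : {ω | B <:+ obsWord A ξ k ω} =
      ⋃ j ∈ range (k + 1), firstHit A B ξ j ∩ {ω | B <:+ obsWord A ξ (j + (k - j)) ω} := by
    ext ω
    simp only [Set.mem_ofPred_eq, Set.mem_iUnion, Set.mem_inter_iff, mem_range, exists_prop]
    constructor
    · intro h
      have hle := hitTime_le h.isInfix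
      exact ⟨hitTime A B ξ ω, Nat.lt_succ_of_le hle, (hitTime_eq_iff ⟨k, h.isInfix⟩).1 rfl,
        by rwa [Nat.add_sub_cancel' hle]⟩
    · rintro ⟨j, hj, -, h⟩
      rwa [Nat.add_sub_cancel' (Nat.le_of_lt_succ hj)] at h
  rw [← ENNReal.toReal_ofReal (suffixProb_nonneg hp A B k),
    ← measure_isSuffix_obsWord hmeas hindep hdist hp, ← measureReal_def, hdecomp,
    measureReal_biUnion_finset
      (fun i _ j _ hij => (disjoint_firstHit hij).mono Set.inter_subset_left Set.inter_subset_left)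
      (fun j _ => (letterSigma_le hmeas _ _ (measurableSet_firstHit A B j)).inter
        (letterSigma_le hmeas _ _ (measurableSet_setOf_obsWord le_rfl A _)))]
  refine sum_congr rfl fun j _ => ?_
  rw [measureReal_def, measure_firstHit_inter_isSuffix hmeas hindep hdist hp hBA,
    ENNReal.toReal_mul, ENNReal.toReal_ofReal (suffixProb_nonneg hp B B _), measureReal_def]

theorem tsum_firstHit_mul_tsum_suffixProb {A B : List S} (hBA : ¬ B <:+: A.dropLast) {α : ℝ}
    (hα0 : 0 ≤ α) (hα1 : α < 1) :
    (∑' j, μ.real (firstHit A B ξ j) * α ^ j) * ∑' t, suffixProb p B B t * α ^ t =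
      ∑' k, suffixProb p A B k * α ^ k := by
  have hU : Summable fun j => μ.real (firstHit A B ξ j) * α ^ j :=
    .of_nonneg_of_le (fun j => mul_nonneg measureReal_nonneg (pow_nonneg hα0 j))
      (fun j => mul_le_of_le_one_left (pow_nonneg hα0 j) measureReal_le_one)
      (summable_geometric_of_lt_one hα0 hα1)
  have hS := summable_suffixProb_mul_pow (p := p) hα0 hα1 B B
  rw [tsum_mul_tsum_eq_tsum_sum_range_of_summable_norm hU.norm hS.norm]
  refine tsum_congr fun k => ?_
  rw [suffixProb_eq_sum_firstHit hmeas hindep hdist hp hBA k, sum_mul]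
  refine sum_congr rfl fun j hj => ?_
  rw [← pow_mul_pow_sub α (Nat.le_of_lt_succ (mem_range.1 hj))]
  ring

end SuffixEvents

section HittingTime

variable {S Ω : Type*} [Finite S] [MeasurableSpace S] [MeasurableSingletonClass S]
  [MeasurableSpace Ω] {μ : Measure Ω} [IsProbabilityMeasure μ] {ξ : ℕ → Ω → S} {A B : List S}
  {α : ℝ}

theorem integral_pow_hitTime (hmeas : ∀ n, Measurable (ξ n))
    (hfin : μ {ω | ∃ k, B <:+: obsWord A ξ k ω} = 1) (hα0 : 0 ≤ α) (hα1 : α ≤ 1) :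
    ∫ ω, α ^ hitTime A B ξ ω ∂μ = ∑' j, μ.real (firstHit A B ξ j) * α ^ j := by
  have hE : ∀ j, MeasurableSet (firstHit A B ξ j) := fun j =>
    letterSigma_le hmeas _ _ (measurableSet_firstHit A B j)
  have hae : ∀ᵐ ω ∂μ, ω ∈ ⋃ j, firstHit A B ξ j :=
    (mem_ae_iff_prob_eq_one (MeasurableSet.iUnion hE)).2 (by rwa [iUnion_firstHit])
  have hint : Integrable (fun ω => α ^ hitTime A B ξ ω) μ :=
    .of_bound (measurable_from_nat.comp (measurable_hitTime hmeas A B)).aestronglyMeasurable 1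
      (ae_of_all _ fun ω => by
        rw [Real.norm_eq_abs, abs_of_nonneg (pow_nonneg hα0 _)]
        exact pow_le_one₀ hα0 hα1)
  have hrestrict : ∫ ω, α ^ hitTime A B ξ ω ∂μ =
      ∫ ω in ⋃ j, firstHit A B ξ j, α ^ hitTime A B ξ ω ∂μ := by
    rw [Measure.restrict_eq_self_of_ae_mem hae]
  rw [hrestrict, integral_iUnion hE (fun i j hij => disjoint_firstHit hij) hint.integrableOn]
  refine tsum_congr fun j => ?_
  rw [setIntegral_congr_fun (hE j) fun ω hω => congrArg (α ^ ·) ((hitTime_eq_iff ⟨j, hω.1⟩).2 hω),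
    setIntegral_const, smul_eq_mul]

end HittingTime

theorem pgf_of_hitTime_general
    {S : Type*} [Fintype S] [DecidableEq S] [MeasurableSpace S] [MeasurableSingletonClass S]
    {Ω : Type*} [MeasurableSpace Ω] (μ : Measure Ω) [IsProbabilityMeasure μ]
    (p : S → ℝ) (hp : ∀ a, 0 < p a)
    (ξ : ℕ → Ω → S) (hmeas : ∀ n, Measurable (ξ n))
    (hindep : iIndepFun ξ μ)
    (hdist : ∀ n a, μ {ω | ξ n ω = a} = ENNReal.ofReal (p a))
    (A B : List S)
    (hBA : ¬ B <:+: A.dropLast)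
    (hfin : μ {ω | ∃ k, B <:+: obsWord A ξ k ω} = 1)
    (α : ℝ) (hα0 : 0 < α) (hα1 : α < 1) :
    (∫ ω, α ^ hitTime A B ξ ω ∂μ) =
      (1 + (1 - α) * corr p A B α) / (1 + (1 - α) * corr p B B α) := by
  have hrenewal := tsum_firstHit_mul_tsum_suffixProb hmeas hindep hdist hp hBA hα0.le hα1
  rw [tsum_suffixProb_mul_pow hp hα0 hα1, tsum_suffixProb_mul_pow hp hα0 hα1] at hrenewal
  have h1α : 0 < 1 - α := sub_pos.2 hα1
  have hcB := corr_nonneg hp hα0.le B B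
  rw [integral_pow_hitTime hmeas hfin hα0.le hα1.le, eq_div_iff (by positivity)]
  field_simp [(patProb_pos hp B).ne'] at hrenewal
  linear_combination hrenewal

/-- For every `0 < α < 1`, the probability generating function of `τ_{AB}` equals
`(1 + (1-α)(A∗B)(α)) / (1 + (1-α)(B∗B)(α))`. -/
theorem pgf_of_hitTime
    {S : Type*} [Fintype S] [DecidableEq S] [MeasurableSpace S] [MeasurableSingletonClass S]
    {Ω : Type*} [MeasurableSpace Ω] (μ : Measure Ω) [IsProbabilityMeasure μ]
    (p : S → ℝ) (hp : ∀ a, 0 < p a) (hpsum : ∑ a, p a = 1)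
    (ξ : ℕ → Ω → S) (hmeas : ∀ n, Measurable (ξ n))
    (hindep : iIndepFun ξ μ)
    (hdist : ∀ n a, μ {ω | ξ n ω = a} = ENNReal.ofReal (p a))
    (A B : List S) (hA : A ≠ []) (hB : B ≠ [])
    (hBA : ¬ B <:+: A.dropLast)
    (hfin : μ {ω | ∃ k, B <:+: obsWord A ξ k ω} = 1)
    (α : ℝ) (hα0 : 0 < α) (hα1 : α < 1) :
    (∫ ω, α ^ hitTime A B ξ ω ∂μ) =
      (1 + (1 - α) * corr p A B α) / (1 + (1 - α) * corr p B B α) :=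
  pgf_of_hitTime_general μ p hp ξ hmeas hindep hdist A B hBA hfin α hα0 hα1
end

section
/- Let R be a commutative ring, M an m×m matrix over R, and t ∈ R. Let 𝒜 be the (m+1)×(m+1) matrix whose (0,0) entry is t, whose remaining first-row entries are all 1, whose remaining first-column entries are all −1, and whose lower-right m×m block is M. Then det 𝒜 = t·det M + Σ_{j=1}^m det M^j, where M^j denotes M with its j-th column replaced by the all-ones column. -/
open Matrix Finset

/-- The `(m+1) × (m+1)` matrix with `(0,0)` entry `t`, remaining first-row entries `1`,
remaining first-column entries `-1`, and lower-right `m × m` block `M`. -/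
def borderedMatrix {R : Type*} [CommRing R] {m : ℕ} (t : R) (M : Matrix (Fin m) (Fin m) R) :
    Matrix (Fin (m + 1)) (Fin (m + 1)) R :=
  Matrix.of fun i j =>
    Fin.cases (Fin.cases t (fun _ => (1 : R)) j)
      (fun i' => Fin.cases (-1 : R) (fun j' => M i' j') j) i

/-!
Expanding a square matrix `A = [[a, vᵀ], [u, M]]` along its first row, the cofactor of the
entry `v j` is `-(adj M · u) j`, so `det A = a · det M - vᵀ · adj M · u` over any commutative
ring. For the bordered matrix this reads `t · det M + Σ_j (adj M · 1) j`, and by Cramer's rule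
`(adj M · 1) j = det M^j`.
-/

namespace Matrix

variable {R : Type*} [CommRing R]

theorem adjugate_fin_succ_zero_zero {n : ℕ} (A : Matrix (Fin (n + 1)) (Fin (n + 1)) R) :
    adjugate A 0 0 = det (A.submatrix Fin.succ Fin.succ) := by
  simp [adjugate_fin_succ_eq_det_submatrix]

theorem adjugate_fin_succ_succ_zero {n : ℕ} (A : Matrix (Fin (n + 1)) (Fin (n + 1)) R)
    (j : Fin n) :
    adjugate A j.succ 0 =
      -(adjugate (A.submatrix Fin.succ Fin.succ) *ᵥ fun i => A i.succ 0) j := by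
  cases n with
  | zero => exact j.elim0
  | succ k =>
    rw [adjugate_fin_succ_eq_det_submatrix, det_succ_column_zero, mulVec, dotProduct,
      Finset.mul_sum, ← Finset.sum_neg_distrib]
    refine Finset.sum_congr rfl fun i _ => ?_
    have hminor : (A.submatrix Fin.succ j.succ.succAbove).submatrix i.succAbove Fin.succ =
        (A.submatrix Fin.succ Fin.succ).submatrix i.succAbove j.succAbove := by
      ext p q
      simp [Fin.succ_succAbove_succ]
    simp only [submatrix_apply, Fin.succAbove_zero, Fin.succ_succAbove_zero, hminor,
      adjugate_fin_succ_eq_det_submatrix, Fin.val_zero, Fin.val_succ]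
    ring

theorem det_fin_succ_eq_mul_det_sub_dotProduct_adjugate_mulVec {n : ℕ}
    (A : Matrix (Fin (n + 1)) (Fin (n + 1)) R) :
    det A = A 0 0 * det (A.submatrix Fin.succ Fin.succ) -
      (fun j => A 0 j.succ) ⬝ᵥ adjugate (A.submatrix Fin.succ Fin.succ) *ᵥ
        fun i => A i.succ 0 := by
  rw [det_eq_sum_mul_adjugate_row A 0, Fin.sum_univ_succ, adjugate_fin_succ_zero_zero,
    sub_eq_add_neg, ← dotProduct_neg, dotProduct]
  simp only [adjugate_fin_succ_succ_zero, Pi.neg_apply]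

end Matrix

/-- `det 𝒜 = t·det M + ∑_{j=1}^m det M^j`, where `M^j` is `M` with its `j`-th column
replaced by the all-ones column. -/
theorem det_borderedMatrix {R : Type*} [CommRing R] {m : ℕ} (t : R)
    (M : Matrix (Fin m) (Fin m) R) :
    (borderedMatrix t M).det =
      t * M.det + ∑ j : Fin m, (M.updateCol j fun _ => (1 : R)).det := by
  have hcorner : borderedMatrix t M 0 0 = t := rfl
  have hrow : (fun j : Fin m => borderedMatrix t M 0 j.succ) = fun _ => 1 := rfl
  have hcol : (fun i : Fin m => borderedMatrix t M i.succ 0) = -fun _ => 1 := rfl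
  have hblock : (borderedMatrix t M).submatrix Fin.succ Fin.succ = M := rfl
  rw [det_fin_succ_eq_mul_det_sub_dotProduct_adjugate_mulVec, hcorner, hrow, hcol, hblock,
    mulVec_neg, dotProduct_neg, sub_neg_eq_add, ← cramer_eq_adjugate_mulVec]
  simp only [dotProduct, one_mul, cramer_apply]
end

section
/- Let R be a commutative ring, M an m×m matrix over R, t ∈ R, and v ∈ R^m. Let 𝒜 be the (m+1)×(m+1) matrix whose (0,0) entry is t, whose remaining first-row entries are all 1, whose remaining first-column entries are all −1, and whose lower-right m×m block is M; and let 𝒜_1 be 𝒜 with its first (0-th) column replaced by the column (1, v_1, …, v_m). Then det 𝒜_1 = det M − Σ_{k=1}^m det M_k, where M_k denotes M with its k-th column replaced by v. -/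
/-!
Expand the determinant along the first row, all of whose entries are `1`. Deleting column `0`
leaves `M`. Deleting column `k + 1` leaves `v` followed by the columns of `M` other than the
`k`-th, which is `M_k` with its `k`-th column cycled to the front, at the cost of a sign
`(-1)^k`. Together with the cofactor sign `(-1)^(k+1)`, each such term contributes `-det M_k`.
-/

open Matrix Finset

section

variable {m : ℕ}

theorem submatrix_succ_succ_of_cons {α : Type*} (r : Fin (m + 1) → α) (v : Fin m → α)
    (M : Matrix (Fin m) (Fin m) α) :
    (of (Fin.cons r fun i => Fin.cons (v i) (M i))).submatrix Fin.succ Fin.succ = M :=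
  rfl

variable {R : Type*} [CommRing R]

theorem det_submatrix_succ_succAbove_succ_of_cons (r : Fin (m + 1) → R) (v : Fin m → R)
    (M : Matrix (Fin m) (Fin m) R) (k : Fin m) :
    ((of (Fin.cons r fun i => Fin.cons (v i) (M i))).submatrix Fin.succ k.succ.succAbove).det =
      (-1) ^ (k : ℕ) * (M.updateCol k v).det := by
  cases m with
  | zero => exact k.elim0
  | succ n =>
    have hcycle : (of (Fin.cons r fun i => Fin.cons (v i) (M i))).submatrix Fin.succ
        k.succ.succAbove = (M.updateCol k v).submatrix id k.cycleRange.symm := by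
      ext i j
      cases j using Fin.cases <;> simp [Fin.succAbove_ne]
    rw [hcycle, det_permute']
    simp

theorem borderedMatrix_updateCol_zero (t : R) (M : Matrix (Fin m) (Fin m) R) (v : Fin m → R) :
    (borderedMatrix t M).updateCol 0 (Fin.cons 1 v) =
      of (Fin.cons (fun _ => 1) fun i => Fin.cons (v i) (M i)) := by
  ext i j
  cases i using Fin.cases <;> cases j using Fin.cases <;> simp [borderedMatrix]

end

/-- `det 𝒜₁ = det M − ∑_{k=1}^m det M_k`, where `𝒜₁` is the bordered matrix `𝒜` with its
`0`-th column replaced by `(1, v₁, …, v_m)`, and `M_k` is `M` with its `k`-th column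
replaced by `v`. -/
theorem det_borderedMatrix_updateFirstColumn {R : Type*} [CommRing R] {m : ℕ} (t : R)
    (M : Matrix (Fin m) (Fin m) R) (v : Fin m → R) :
    ((borderedMatrix t M).updateCol 0 (Fin.cons (1 : R) v)).det =
      M.det - ∑ k : Fin m, (M.updateCol k v).det := by
  rw [borderedMatrix_updateCol_zero, det_succ_row_zero, Fin.sum_univ_succ]
  simp only [Fin.succAbove_zero, submatrix_succ_succ_of_cons,
    det_submatrix_succ_succAbove_succ_of_cons]
  simp [pow_succ, ← mul_assoc, ← mul_pow, sub_eq_add_neg]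
end

section
/- Let R be a commutative ring, M an m×m matrix over R, t ∈ R, and v ∈ R^m. Let 𝒜 be the (m+1)×(m+1) matrix whose (0,0) entry is t, whose remaining first-row entries are all 1, whose remaining first-column entries are all −1, and whose lower-right m×m block is M. For 1 ≤ k ≤ m, let 𝒜_{1+k} be 𝒜 with its (1+k)-th column replaced by the column (1, v_1, …, v_m). Then det 𝒜_{1+k} = t·det M_k + Σ_{j=1}^m det M_k^j, where M_k denotes M with its k-th column replaced by v, and M_k^j denotes M_k with its j-th column replaced by the all-ones column. -/
/-!
Expand the determinant along the first row. Deleting column `1 + j` leaves a minor whose first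
column is the border column and whose remaining columns are those of the lower block without
column `j`; cycling the border column into position `j` costs `(-1)^j`, so each cofactor becomes
minus the determinant of the block with column `j` replaced by the border column. For the
bordered matrix that column is `-1`, and pulling out the sign gives the all-ones column.
-/

open Matrix Finset

namespace Matrix

variable {R : Type*} [CommRing R] {n : ℕ}

theorem det_updateCol_neg (A : Matrix (Fin n) (Fin n) R) (j : Fin n) (c : Fin n → R) :
    (A.updateCol j (-c)).det = -(A.updateCol j c).det := by
  rw [← neg_one_smul R c, det_updateCol_smul, neg_one_mul]

theorem det_submatrix_succ_succAbove_succ (A : Matrix (Fin (n + 1)) (Fin (n + 1)) R)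
    (j : Fin n) :
    (A.submatrix Fin.succ j.succ.succAbove).det =
      (-1) ^ (j : ℕ) * ((A.submatrix Fin.succ Fin.succ).updateCol j fun i => A i.succ 0).det := by
  cases n with
  | zero => exact j.elim0
  | succ n =>
    have hperm : A.submatrix Fin.succ j.succ.succAbove =
        ((A.submatrix Fin.succ Fin.succ).updateCol j fun i => A i.succ 0).submatrix id
          j.cycleRange.symm := by
      ext i l
      cases l using Fin.cases with
      | zero => simp
      | succ l => simp [Fin.succAbove_ne, Fin.succ_succAbove_succ]
    rw [hperm, det_permute', Equiv.Perm.sign_symm, Fin.sign_cycleRange]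
    simp

theorem det_succ_eq_corner_mul_det_sub_sum (A : Matrix (Fin (n + 1)) (Fin (n + 1)) R) :
    A.det = A 0 0 * (A.submatrix Fin.succ Fin.succ).det -
      ∑ j : Fin n, A 0 j.succ *
        ((A.submatrix Fin.succ Fin.succ).updateCol j fun i => A i.succ 0).det := by
  rw [det_succ_row_zero, Fin.sum_univ_succ, sub_eq_add_neg, ← sum_neg_distrib]
  congr 1
  · simp
  · refine sum_congr rfl fun j _ => ?_
    rw [det_submatrix_succ_succAbove_succ, Fin.val_succ]
    ring_nf
    simp [pow_mul']

end Matrix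

section borderedMatrix

variable {R : Type*} [CommRing R] {m : ℕ} (t : R) (M : Matrix (Fin m) (Fin m) R)

@[simp] theorem borderedMatrix_zero_zero : borderedMatrix t M 0 0 = t := rfl

@[simp] theorem borderedMatrix_zero_succ (j : Fin m) : borderedMatrix t M 0 j.succ = 1 := rfl

@[simp] theorem borderedMatrix_succ_zero (i : Fin m) : borderedMatrix t M i.succ 0 = -1 := rfl

@[simp] theorem borderedMatrix_succ_succ (i j : Fin m) :
    borderedMatrix t M i.succ j.succ = M i j := rfl

end borderedMatrix

/-- For `1 ≤ k ≤ m`, `det 𝒜_{1+k} = t·det M_k + ∑_{j=1}^m det M_k^j`, where `𝒜_{1+k}` is the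
bordered matrix `𝒜` with its `(1+k)`-th column replaced by `(1, v₁, …, v_m)`, `M_k` is `M`
with its `k`-th column replaced by `v`, and `M_k^j` is `M_k` with its `j`-th column replaced
by the all-ones column. -/
theorem det_borderedMatrix_updateLaterColumn {R : Type*} [CommRing R] {m : ℕ} (t : R)
    (M : Matrix (Fin m) (Fin m) R) (v : Fin m → R) (k : Fin m) :
    ((borderedMatrix t M).updateCol k.succ (Fin.cons (1 : R) v)).det =
      t * (M.updateCol k v).det +
        ∑ j : Fin m, ((M.updateCol k v).updateCol j fun _ => (1 : R)).det := by
  set B := (borderedMatrix t M).updateCol k.succ (Fin.cons (1 : R) v)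
  have hcorner : B 0 0 = t := by simp [B, (Fin.succ_ne_zero k).symm]
  have hrow : ∀ j : Fin m, B 0 j.succ = 1 := fun j => by
    by_cases h : j = k <;> simp [B, h]
  have hcol : (fun i : Fin m => B i.succ 0) = -fun _ => 1 := by
    ext i; simp [B, (Fin.succ_ne_zero k).symm]
  have hblock : B.submatrix Fin.succ Fin.succ = M.updateCol k v := by
    ext i j; simp [B, updateCol_apply]
  rw [det_succ_eq_corner_mul_det_sub_sum, hcorner, hblock, hcol]
  simp [hrow, det_updateCol_neg, sub_eq_add_neg]
end

section
/- Let (ξ_n)_{n≥1} be i.i.d. fair coin tosses with values in {H,T}, Pr(ξ=H)=Pr(ξ=T)=1/2, and let B_1 = THH, B_2 = HTH, B_3 = HHT. Let τ_i be the first time n such that B_i occurs as a contiguous subpattern of ξ_1…ξ_n and τ = min(τ_1, τ_2, τ_3). Then Pr(τ = τ_1) = 5/12, Pr(τ = τ_2) = 1/3, and Pr(τ = τ_3) = 1/4. -/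
open MeasureTheory ProbabilityTheory

/-- The two-letter alphabet of coin outcomes: heads `H` and tails `T`. -/
inductive Coin : Type
  | H : Coin
  | T : Coin
  deriving DecidableEq

instance : Fintype Coin := ⟨{Coin.H, Coin.T}, fun x => by cases x <;> simp⟩

instance : MeasurableSpace Coin := ⊤

/-- The word `ξ₁…ξ_n` of the first `n` coin tosses (here `ξ i` denotes the `(i+1)`-st toss). -/
def tossWord {Ω : Type*} (ξ : ℕ → Ω → Coin) (n : ℕ) (ω : Ω) : List Coin :=
  List.ofFn fun i : Fin n => ξ i ω

/-- The first time `n` such that the pattern `Bp` occurs as a contiguous subpattern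
of `ξ₁…ξ_n`. -/
noncomputable def firstOcc {Ω : Type*} (Bp : List Coin) (ξ : ℕ → Ω → Coin) (ω : Ω) : ℕ :=
  sInf {n : ℕ | Bp <:+: tossWord ξ n ω}

/-! The race is run by a deterministic automaton on the tosses: while no pattern has
appeared its state is the last two letters read, and it is absorbed in `won b` as soon as
`b` appears. Because the patterns have equal length, two of them never appear for the first
time at the same toss, so `τ = τᵢ` exactly when the automaton is absorbed in `won Bᵢ`. For
i.i.d. fair tosses the probability of being absorbed in a given state is a harmonic function
of the starting state, and the seven harmonic equations at the live states determine it from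
its boundary values. -/

namespace PatternRace

/-- `live u`: no pattern has appeared yet and `u` holds the last `k` letters read;
`won b`: `b` was the first pattern to appear. -/
inductive RaceState (α : Type*)
  | live (u : List α)
  | won (b : List α)

section Automaton

variable {α : Type*}

def raceStep [DecidableEq α] (Bs : List (List α)) (k : ℕ) : RaceState α → α → RaceState α
  | .live u, c => if u ++ [c] ∈ Bs then .won (u ++ [c]) else .live ((u ++ [c]).rtake k)
  | .won b, _ => .won b

lemma rtake_rtake_of_le {l : List α} {k m : ℕ} (h : k ≤ m) :
    (l.rtake m).rtake k = l.rtake k := by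
  simp [List.rtake_eq_reverse_take_reverse, List.take_take, min_eq_left h]

lemma infix_concat_iff_eq_rtake {b w : List α} {c : α} {k : ℕ} (hb : b.length = k + 1)
    (hw : ¬ b <:+: w) : b <:+: w ++ [c] ↔ b = (w ++ [c]).rtake (k + 1) := by
  rw [List.infix_concat_iff, or_iff_left hw, List.suffix_iff_eq_drop, hb]
  rfl

variable [DecidableEq α] {Bs : List (List α)} {k : ℕ}

lemma foldl_raceStep_of_forall_not_infix (hlen : ∀ b ∈ Bs, b.length = k + 1) {w : List α}
    (hw : ∀ b ∈ Bs, ¬ b <:+: w) : w.foldl (raceStep Bs k) (.live []) = .live (w.rtake k) := by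
  induction w using List.reverseRecOn with
  | nil => simp
  | append_singleton w c ih =>
    have hw' : ∀ b ∈ Bs, ¬ b <:+: w := fun b hb h =>
      hw b hb (h.trans (List.prefix_append w [c]).isInfix)
    have hnot : w.rtake k ++ [c] ∉ Bs := fun hmem => by
      refine hw _ hmem ((infix_concat_iff_eq_rtake (hlen _ hmem) (hw' _ hmem)).2 ?_)
      rw [List.rtake_concat_succ]
    rw [List.foldl_concat, ih hw', raceStep, if_neg hnot, ← List.rtake_concat_succ,
      rtake_rtake_of_le k.le_succ]

lemma foldl_raceStep_concat_eq_won (hlen : ∀ b ∈ Bs, b.length = k + 1) {w : List α} {c : α}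
    (hw : ∀ b ∈ Bs, ¬ b <:+: w) {b : List α} (hb : b ∈ Bs) (hbc : b <:+: w ++ [c]) :
    (w ++ [c]).foldl (raceStep Bs k) (.live []) = .won b := by
  rw [infix_concat_iff_eq_rtake (hlen b hb) (hw b hb), List.rtake_concat_succ] at hbc
  subst hbc
  rw [List.foldl_concat, foldl_raceStep_of_forall_not_infix hlen hw, raceStep, if_pos hb]

lemma foldl_raceStep_won (b v : List α) : v.foldl (raceStep Bs k) (.won b) = .won b :=
  List.foldl_fixed' (fun _ => rfl) v

end Automaton

section HittingEvent

variable {Ω α σ : Type*} (ξ : ℕ → Ω → α)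

def hitEvent (step : σ → α → σ) (tgt s : σ) : Set Ω :=
  {ω | ∃ n, (List.ofFn fun i : Fin n => ξ i ω).foldl step s = tgt}

lemma hitEvent_self {step : σ → α → σ} {tgt : σ} : hitEvent ξ step tgt tgt = Set.univ :=
  Set.eq_univ_of_forall fun _ => ⟨0, rfl⟩

lemma hitEvent_raceStep_won_of_ne [DecidableEq α] {Bs : List (List α)} {k : ℕ}
    {b b' : List α} (h : b' ≠ b) : hitEvent ξ (raceStep Bs k) (.won b) (.won b') = ∅ := by
  ext ω
  simp [hitEvent, foldl_raceStep_won, h]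

end HittingEvent

section UniformLetters

open Finset Filter Topology

lemma card_filter_ofFn_succ {α : Type*} [Fintype α] (P : List α → Prop) [DecidablePred P]
    (n : ℕ) :
    #{v : Fin (n + 1) → α | P (List.ofFn v)} = ∑ c, #{u : Fin n → α | P (c :: List.ofFn u)} := by
  simp only [card_filter]
  rw [← Fintype.sum_equiv (Fin.consEquiv fun _ => α) _ _ (fun _ => rfl), Fintype.sum_prod_type]
  simp [List.ofFn_succ]

variable {Ω α : Type*} [MeasurableSpace Ω] [MeasurableSpace α] [MeasurableSingletonClass α]
  {μ : Measure Ω} {ξ : ℕ → Ω → α} {q : ENNReal}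

lemma measure_prefix_eq (hindep : iIndepFun ξ μ) (hdist : ∀ n c, μ {ω | ξ n ω = c} = q)
    {n : ℕ} (v : Fin n → α) : μ {ω | (fun i : Fin n => ξ i ω) = v} = q ^ n := by
  have h := (hindep.precomp Fin.val_injective).meas_iInter
    (s := fun i : Fin n => ξ i ⁻¹' {v i}) fun i => ⟨{v i}, measurableSet_singleton _, rfl⟩
  have hset : ⋂ i : Fin n, ξ i ⁻¹' {v i} = {ω | (fun i : Fin n => ξ i ω) = v} := by
    ext ω; simp [funext_iff]
  rw [← hset, h]
  simp [Set.preimage, hdist]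

lemma measurableSet_prefix [Finite α] (hmeas : ∀ n, Measurable (ξ n)) {n : ℕ}
    (p : (Fin n → α) → Prop) : MeasurableSet {ω | p fun i => ξ i ω} :=
  (measurable_pi_lambda (fun ω (i : Fin n) => ξ i ω) fun i => hmeas i)
    (Set.toFinite {v | p v}).measurableSet

variable [Fintype α]

lemma measure_prefix (hmeas : ∀ n, Measurable (ξ n)) (hindep : iIndepFun ξ μ)
    (hdist : ∀ n c, μ {ω | ξ n ω = c} = q) {n : ℕ} (p : (Fin n → α) → Prop) [DecidablePred p] :
    μ {ω | p fun i => ξ i ω} = #{v | p v} * q ^ n := by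
  have h := sum_measure_preimage_singleton (μ := μ) {v | p v} (f := fun ω (i : Fin n) => ξ i ω)
    fun v _ => measurableSet_prefix hmeas (· = v)
  simp only [coe_filter, mem_univ, true_and] at h
  rw [← Set.preimage_ofPred_eq, ← h]
  simp only [Set.preimage, Set.mem_singleton_iff, measure_prefix_eq hindep hdist, sum_const,
    nsmul_eq_mul]

lemma measure_ofFn_succ (hmeas : ∀ n, Measurable (ξ n)) (hindep : iIndepFun ξ μ)
    (hdist : ∀ n c, μ {ω | ξ n ω = c} = q) (P : List α → Prop) (n : ℕ) :
    μ {ω | P (List.ofFn fun i : Fin (n + 1) => ξ i ω)} =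
      ∑ c, q * μ {ω | P (c :: List.ofFn fun i : Fin n => ξ i ω)} := by
  have : DecidablePred P := Classical.decPred P
  have hc : ∀ c, μ {ω | P (c :: List.ofFn fun i : Fin n => ξ i ω)} =
      #{u : Fin n → α | P (c :: List.ofFn u)} * q ^ n :=
    fun c => measure_prefix hmeas hindep hdist (fun u => P (c :: List.ofFn u))
  simp only [measure_prefix hmeas hindep hdist (fun v => P (List.ofFn v)), card_filter_ofFn_succ,
    hc, Nat.cast_sum, sum_mul, pow_succ]
  exact sum_congr rfl fun c _ => by ring

lemma measure_hitEvent [IsFiniteMeasure μ] {σ : Type*} {step : σ → α → σ} {tgt : σ}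
    (hmeas : ∀ n, Measurable (ξ n)) (hindep : iIndepFun ξ μ)
    (hdist : ∀ n c, μ {ω | ξ n ω = c} = q) (htgt : ∀ c, step tgt c = tgt) (s : σ) :
    μ (hitEvent ξ step tgt s) = ∑ c, q * μ (hitEvent ξ step tgt (step s c)) := by
  let D : σ → ℕ → Set Ω := fun s n => {ω | (List.ofFn fun i : Fin n => ξ i ω).foldl step s = tgt}
  have hmono : ∀ s, Monotone (D s) := fun s => monotone_nat_of_le_succ fun n ω hω => by
    simp only [D, Set.mem_ofPred_eq, List.ofFn_succ', List.concat_eq_append,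
      List.foldl_concat] at hω ⊢
    simp [hω, htgt]
  have hlim : ∀ s, Tendsto (fun n => μ (D s n)) atTop (𝓝 (μ (hitEvent ξ step tgt s))) :=
    fun s => by
      have : hitEvent ξ step tgt s = ⋃ n, D s n := by ext ω; simp [hitEvent, D]
      rw [this]; exact tendsto_measure_iUnion_atTop (hmono s)
  have hsucc : ∀ n, μ (D s (n + 1)) = ∑ c, q * μ (D (step s c) n) := fun n =>
    measure_ofFn_succ hmeas hindep hdist (fun w => w.foldl step s = tgt) n
  refine tendsto_nhds_unique ((hlim s).comp (tendsto_add_atTop_nat 1)) ?_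
  simp only [Function.comp_def, hsucc]
  exact tendsto_finsetSum _ fun c _ =>
    ENNReal.Tendsto.const_mul (hlim _) (Or.inr (hdist 0 c ▸ measure_ne_top μ _))

end UniformLetters

section Bridge

variable {Ω : Type*} (ξ : ℕ → Ω → Coin) (ω : Ω)

lemma tossWord_succ (n : ℕ) : tossWord ξ (n + 1) ω = tossWord ξ n ω ++ [ξ n ω] := by
  rw [tossWord, List.ofFn_succ', List.concat_eq_append]; rfl

lemma tossWord_prefix {m n : ℕ} (h : m ≤ n) : tossWord ξ m ω <+: tossWord ξ n ω := by
  induction n, h using Nat.le_induction with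
  | base => exact List.prefix_refl _
  | succ n _ ih => exact ih.trans (tossWord_succ ξ ω n ▸ List.prefix_append _ _)

variable {ξ ω} {Bs : List (List Coin)} {k : ℕ}

lemma exists_eq_succ_of_infix_tossWord {b : List Coin} (hb : b.length = k + 1) {T : ℕ}
    (hT : b <:+: tossWord ξ T ω) : ∃ t, T = t + 1 := by
  refine Nat.exists_eq_add_one.2 (Nat.pos_of_ne_zero fun hT0 => ?_)
  subst hT0
  simpa [tossWord, hb] using hT.length_le

lemma eq_of_infix_tossWord_of_forall_lt (hlen : ∀ b ∈ Bs, b.length = k + 1) {T : ℕ}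
    (hbefore : ∀ n < T, ∀ b ∈ Bs, ¬ b <:+: tossWord ξ n ω) {b b' : List Coin} (hb : b ∈ Bs)
    (hb' : b' ∈ Bs) (hbT : b <:+: tossWord ξ T ω) (hb'T : b' <:+: tossWord ξ T ω) : b = b' := by
  obtain ⟨t, rfl⟩ := exists_eq_succ_of_infix_tossWord (hlen b hb) hbT
  have hnone := hbefore t t.lt_succ_self
  rw [tossWord_succ] at hbT hb'T
  rw [(infix_concat_iff_eq_rtake (hlen b hb) (hnone b hb)).1 hbT,
    (infix_concat_iff_eq_rtake (hlen b' hb') (hnone b' hb')).1 hb'T]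

lemma exists_foldl_raceStep_eq_won_iff (hlen : ∀ b ∈ Bs, b.length = k + 1) {T : ℕ}
    (hbefore : ∀ n < T, ∀ b ∈ Bs, ¬ b <:+: tossWord ξ n ω) {b₀ : List Coin} (hb₀ : b₀ ∈ Bs)
    (hT : b₀ <:+: tossWord ξ T ω) (b : List Coin) :
    (∃ n, (tossWord ξ n ω).foldl (raceStep Bs k) (.live []) = .won b) ↔ b = b₀ := by
  obtain ⟨t, rfl⟩ := exists_eq_succ_of_infix_tossWord (hlen b₀ hb₀) hT
  have hwon : ∀ n ≥ t + 1, (tossWord ξ n ω).foldl (raceStep Bs k) (.live []) = .won b₀ := by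
    intro n hn
    obtain ⟨v, hv⟩ := tossWord_prefix ξ ω hn
    rw [← hv, List.foldl_append, tossWord_succ,
      foldl_raceStep_concat_eq_won hlen (hbefore t t.lt_succ_self) hb₀ (tossWord_succ ξ ω t ▸ hT),
      foldl_raceStep_won]
  constructor
  · rintro ⟨n, hn⟩
    rcases lt_or_ge n (t + 1) with hlt | hge
    · rw [foldl_raceStep_of_forall_not_infix hlen (hbefore n hlt)] at hn
      cases hn
    · rw [hwon n hge] at hn
      exact (RaceState.won.inj hn).symm
  · rintro rfl
    exact ⟨t + 1, hwon _ le_rfl⟩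

lemma forall_firstOcc_le_iff (hlen : ∀ b ∈ Bs, b.length = k + 1)
    (hocc : ∀ b ∈ Bs, ∃ n, b <:+: tossWord ξ n ω) {T : ℕ}
    (hbefore : ∀ n < T, ∀ b ∈ Bs, ¬ b <:+: tossWord ξ n ω) {b₀ : List Coin} (hb₀ : b₀ ∈ Bs)
    (hT : b₀ <:+: tossWord ξ T ω) {b : List Coin} (hb : b ∈ Bs) :
    (∀ b' ∈ Bs, firstOcc b ξ ω ≤ firstOcc b' ξ ω) ↔ b = b₀ := by
  -- without an occurrence, `firstOcc` would be the junk value `sInf ∅ = 0`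
  have hge : ∀ b' ∈ Bs, T ≤ firstOcc b' ξ ω := fun b' hb' =>
    not_lt.1 fun hlt => hbefore _ hlt b' hb' (Nat.sInf_mem (hocc b' hb'))
  have hle : firstOcc b₀ ξ ω ≤ T := Nat.sInf_le hT
  constructor
  · intro h
    have hbT : firstOcc b ξ ω = T := le_antisymm ((h b₀ hb₀).trans hle) (hge b hb)
    exact eq_of_infix_tossWord_of_forall_lt hlen hbefore hb hb₀
      (hbT ▸ Nat.sInf_mem (hocc b hb)) hT
  · rintro rfl b' hb'
    exact hle.trans (hge b' hb')

lemma exists_foldl_raceStep_eq_won_iff_forall_firstOcc_le (hlen : ∀ b ∈ Bs, b.length = k + 1)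
    (hocc : ∀ b ∈ Bs, ∃ n, b <:+: tossWord ξ n ω) {b : List Coin} (hb : b ∈ Bs) :
    (∃ n, (tossWord ξ n ω).foldl (raceStep Bs k) (.live []) = .won b) ↔
      ∀ b' ∈ Bs, firstOcc b ξ ω ≤ firstOcc b' ξ ω := by
  classical
  have hex : ∃ n, ∃ b ∈ Bs, b <:+: tossWord ξ n ω := (hocc b hb).imp fun n h => ⟨b, hb, h⟩
  obtain ⟨b₀, hb₀, hT⟩ := Nat.find_spec hex
  have hbefore : ∀ n < Nat.find hex, ∀ b ∈ Bs, ¬ b <:+: tossWord ξ n ω :=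
    fun n hn b hb h => Nat.find_min hex hn ⟨b, hb, h⟩
  rw [exists_foldl_raceStep_eq_won_iff hlen hbefore hb₀ hT,
    forall_firstOcc_le_iff hlen hocc hbefore hb₀ hT hb]

end Bridge

section CoinTosses

variable {Ω : Type*} [MeasurableSpace Ω] {μ : Measure Ω} {ξ : ℕ → Ω → Coin}

lemma measurableSet_exists_infix_tossWord (hmeas : ∀ n, Measurable (ξ n)) (b : List Coin) :
    MeasurableSet {ω | ∃ n, b <:+: tossWord ξ n ω} := by
  simp only [Set.ofPred_exists]
  exact .iUnion fun n => measurableSet_prefix hmeas fun v => b <:+: List.ofFn v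

lemma measure_forall_firstOcc_le {Bs : List (List Coin)} {k : ℕ}
    (hlen : ∀ b ∈ Bs, b.length = k + 1) (hocc : ∀ᵐ ω ∂μ, ∀ b ∈ Bs, ∃ n, b <:+: tossWord ξ n ω)
    {b : List Coin} (hb : b ∈ Bs) :
    μ {ω | ∀ b' ∈ Bs, firstOcc b ξ ω ≤ firstOcc b' ξ ω} =
      μ (hitEvent ξ (raceStep Bs k) (.won b) (.live [])) :=
  measure_congr <| Filter.eventuallyEq_set.2 <| hocc.mono fun _ hω =>
    (exists_foldl_raceStep_eq_won_iff_forall_firstOcc_le hlen hω hb).symm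

lemma sum_coin {M : Type*} [AddCommMonoid M] (f : Coin → M) : ∑ c, f c = f .H + f .T :=
  Finset.sum_pair (by decide)

lemma toReal_measure_hitEvent_coin [IsFiniteMeasure μ] {σ : Type*} {step : σ → Coin → σ}
    {tgt : σ} (hmeas : ∀ n, Measurable (ξ n)) (hindep : iIndepFun ξ μ)
    (hdist : ∀ n c, μ {ω | ξ n ω = c} = 1 / 2) (htgt : ∀ c, step tgt c = tgt) (s : σ) :
    (μ (hitEvent ξ step tgt s)).toReal = 2⁻¹ * (μ (hitEvent ξ step tgt (step s .H))).toReal +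
      2⁻¹ * (μ (hitEvent ξ step tgt (step s .T))).toReal := by
  rw [measure_hitEvent hmeas hindep hdist htgt, sum_coin, ENNReal.toReal_add (by finiteness)
    (by finiteness), ENNReal.toReal_mul, ENNReal.toReal_mul]
  norm_num

end CoinTosses

section ThreePatterns

open Coin

def racePatterns : List (List Coin) := [[T, H, H], [H, T, H], [H, H, T]]

lemma length_of_mem_racePatterns : ∀ b ∈ racePatterns, b.length = 2 + 1 := by
  simp [racePatterns]

lemma harmonic_raceStep_live_nil (p : RaceState Coin → ℝ)
    (hp : ∀ s, p s = 2⁻¹ * p (raceStep racePatterns 2 s H) +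
      2⁻¹ * p (raceStep racePatterns 2 s T)) :
    p (.live []) = 5 / 12 * p (.won [T, H, H]) + 1 / 3 * p (.won [H, T, H]) +
      1 / 4 * p (.won [H, H, T]) := by
  have e₀ : p (.live []) = 2⁻¹ * p (.live [H]) + 2⁻¹ * p (.live [T]) := hp _
  have eH : p (.live [H]) = 2⁻¹ * p (.live [H, H]) + 2⁻¹ * p (.live [H, T]) := hp _
  have eT : p (.live [T]) = 2⁻¹ * p (.live [T, H]) + 2⁻¹ * p (.live [T, T]) := hp _
  have eHH : p (.live [H, H]) = 2⁻¹ * p (.live [H, H]) + 2⁻¹ * p (.won [H, H, T]) := hp _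
  have eHT : p (.live [H, T]) = 2⁻¹ * p (.won [H, T, H]) + 2⁻¹ * p (.live [T, T]) := hp _
  have eTH : p (.live [T, H]) = 2⁻¹ * p (.won [T, H, H]) + 2⁻¹ * p (.live [H, T]) := hp _
  have eTT : p (.live [T, T]) = 2⁻¹ * p (.live [T, H]) + 2⁻¹ * p (.live [T, T]) := hp _
  linarith

variable {Ω : Type*} [MeasurableSpace Ω] {μ : Measure Ω} [IsProbabilityMeasure μ]
  {ξ : ℕ → Ω → Coin}

lemma measure_hitEvent_racePatterns (hmeas : ∀ n, Measurable (ξ n)) (hindep : iIndepFun ξ μ)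
    (hdist : ∀ n c, μ {ω | ξ n ω = c} = 1 / 2) :
    μ (hitEvent ξ (raceStep racePatterns 2) (.won [T, H, H]) (.live [])) = 5 / 12 ∧
      μ (hitEvent ξ (raceStep racePatterns 2) (.won [H, T, H]) (.live [])) = 1 / 3 ∧
      μ (hitEvent ξ (raceStep racePatterns 2) (.won [H, H, T]) (.live [])) = 1 / 4 := by
  have key := fun b => harmonic_raceStep_live_nil
    (fun s => (μ (hitEvent ξ (raceStep racePatterns 2) (.won b) s)).toReal)
    fun s => toReal_measure_hitEvent_coin hmeas hindep hdist (fun _ => rfl) s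
  refine ⟨?_, ?_, ?_⟩ <;> rw [← ENNReal.ofReal_toReal (measure_ne_top μ _), key] <;>
    simp [hitEvent_self, hitEvent_raceStep_won_of_ne, ENNReal.ofReal_div_of_pos]

end ThreePatterns

end PatternRace

open PatternRace in
/-- For i.i.d. fair coin tosses and the patterns `B₁ = THH`, `B₂ = HTH`, `B₃ = HHT`:
`Pr(τ = τ₁) = 5/12`, `Pr(τ = τ₂) = 1/3`, `Pr(τ = τ₃) = 1/4`. -/
theorem coin_example_no_initial_pattern
    {Ω : Type*} [MeasurableSpace Ω] (μ : Measure Ω) [IsProbabilityMeasure μ]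
    (ξ : ℕ → Ω → Coin) (hmeas : ∀ n, Measurable (ξ n))
    (hindep : iIndepFun ξ μ)
    (hdist : ∀ n c, μ {ω | ξ n ω = c} = 1 / 2)
    (τ₁ τ₂ τ₃ τ : Ω → ℕ)
    (hτ₁ : τ₁ = firstOcc [Coin.T, Coin.H, Coin.H] ξ)
    (hτ₂ : τ₂ = firstOcc [Coin.H, Coin.T, Coin.H] ξ)
    (hτ₃ : τ₃ = firstOcc [Coin.H, Coin.H, Coin.T] ξ)
    (hτ : τ = fun ω => min (min (τ₁ ω) (τ₂ ω)) (τ₃ ω))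
    (hfin : μ {ω | (∃ n, [Coin.T, Coin.H, Coin.H] <:+: tossWord ξ n ω) ∧
        (∃ n, [Coin.H, Coin.T, Coin.H] <:+: tossWord ξ n ω) ∧
        (∃ n, [Coin.H, Coin.H, Coin.T] <:+: tossWord ξ n ω)} = 1) :
    μ {ω | τ ω = τ₁ ω} = 5 / 12 ∧ μ {ω | τ ω = τ₂ ω} = 1 / 3 ∧
      μ {ω | τ ω = τ₃ ω} = 1 / 4 := by
  subst hτ hτ₁ hτ₂ hτ₃
  have hocc : ∀ᵐ ω ∂μ, ∀ b ∈ racePatterns, ∃ n, b <:+: tossWord ξ n ω := by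
    have hG := (measurableSet_exists_infix_tossWord hmeas [Coin.T, Coin.H, Coin.H]).inter
      ((measurableSet_exists_infix_tossWord hmeas [Coin.H, Coin.T, Coin.H]).inter
        (measurableSet_exists_infix_tossWord hmeas [Coin.H, Coin.H, Coin.T]))
    filter_upwards [(mem_ae_iff_prob_eq_one hG).2 hfin] with ω ⟨h₁, h₂, h₃⟩
    simpa [racePatterns] using ⟨h₁, h₂, h₃⟩
  have hwin : ∀ b ∈ racePatterns,
      μ {ω | min (min (firstOcc [Coin.T, Coin.H, Coin.H] ξ ω)
        (firstOcc [Coin.H, Coin.T, Coin.H] ξ ω)) (firstOcc [Coin.H, Coin.H, Coin.T] ξ ω) =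
          firstOcc b ξ ω} =
      μ (hitEvent ξ (raceStep racePatterns 2) (.won b) (.live [])) := by
    intro b hb
    rw [← measure_forall_firstOcc_le length_of_mem_racePatterns hocc hb]
    congr 1; ext ω
    simp only [racePatterns, List.mem_cons, List.not_mem_nil, or_false] at hb
    simp only [Set.mem_ofPred_eq, racePatterns, List.forall_mem_cons, List.not_mem_nil,
      IsEmpty.forall_iff, implies_true, and_true]
    rcases hb with rfl | rfl | rfl <;> omega
  obtain ⟨h₁, h₂, h₃⟩ := measure_hitEvent_racePatterns hmeas hindep hdist
  exact ⟨(hwin _ (by simp [racePatterns])).trans h₁, (hwin _ (by simp [racePatterns])).trans h₂,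
    (hwin _ (by simp [racePatterns])).trans h₃⟩
end
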